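/- arXiv:2312.05369 — 2 statements merged into one kernel-verified Lean document; each statement's English description precedes it below -/
import Mathlib

section
/- For every odd integer k ≥ 5 and every real x in the interval I_k = (N/2 + N/(2k), N/2 + 3N/(2k)) with N > 0, one has |sin(kπx/N)| ≤ (k/2)·|sin(2πx/N)|. -/
open Real

lemma aux_sin_lb (r θ : ℝ) (hr : 4 ≤ r) (h1 : π / r ≤ θ) (h2 : θ ≤ 3 * π / r) :
    2 / r ≤ Real.sin θ := by
  have hr0 : (0:ℝ) < r := by linarith
  have hπ := Real.pi_pos
  rcases le_or_gt θ (π / 2) with h | h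
  · have hθ0 : 0 ≤ θ := le_trans (by positivity) h1
    have := Real.mul_le_sin hθ0 h
    have h2r : 2 / π * (π / r) ≤ 2 / π * θ := by
      apply mul_le_mul_of_nonneg_left h1 (by positivity)
    have : 2 / π * (π / r) = 2 / r := by field_simp
    linarith
  · have hθπ : θ ≤ π := by
      calc θ ≤ 3 * π / r := h2
      _ ≤ π := by rw [div_le_iff₀ hr0]; nlinarith
    have h0 : 0 ≤ π - θ := by linarith
    have h2' : π - θ ≤ π / 2 := by linarith
    have := Real.mul_le_sin h0 h2'
    rw [Real.sin_pi_sub] at this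
    have hlb : 2 - 6 / r ≤ 2 / π * (π - θ) := by
      have : π - 3 * π / r ≤ π - θ := by linarith
      have h3 : 2 / π * (π - 3 * π / r) ≤ 2 / π * (π - θ) :=
        mul_le_mul_of_nonneg_left this (by positivity)
      have he : 2 / π * (π - 3 * π / r) = 2 - 6 / r := by field_simp; ring
      linarith
    have : 2 / r ≤ 2 - 6 / r := by
      rw [div_le_iff₀ hr0, sub_mul, div_mul_cancel₀ _ (ne_of_gt hr0)]
      nlinarith
    linarith

/-- For odd k ≥ 5 and x in I_k = (N/2 + N/(2k), N/2 + 3N/(2k)),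
one has |sin(kπx/N)| ≤ (k/2)·|sin(2πx/N)|. -/
theorem stmt_6 (N : ℝ) (hN : 0 < N) (k : ℤ) (hk : 5 ≤ k) (hko : Odd k)
    (x : ℝ) (hx : x ∈ Set.Ioo (N / 2 + N / (2 * k)) (N / 2 + 3 * N / (2 * k))) :
    |Real.sin (k * π * x / N)| ≤ ((k : ℝ) / 2) * |Real.sin (2 * π * x / N)| := by
  have hkr : (5:ℝ) ≤ (k:ℝ) := by exact_mod_cast hk
  have hk0 : (0:ℝ) < (k:ℝ) := by linarith
  have hπ := Real.pi_pos
  set θ : ℝ := 2 * π * x / N - π with hθdef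
  have hx1 := hx.1
  have hx2 := hx.2
  have h1 : π / k ≤ θ := by
    rw [hθdef, le_sub_iff_add_le, le_div_iff₀ hN]
    have : (N / 2 + N / (2 * k)) * (2 * π) ≤ x * (2 * π) := by
      apply mul_le_mul_of_nonneg_right (le_of_lt hx1) (by positivity)
    have he : (N / 2 + N / (2 * k)) * (2 * π) = (π / k + π) * N := by
      field_simp; ring
    nlinarith
  have h2 : θ ≤ 3 * π / k := by
    rw [hθdef, sub_le_iff_le_add, div_le_iff₀ hN]
    have : x * (2 * π) ≤ (N / 2 + 3 * N / (2 * k)) * (2 * π) := by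
      apply mul_le_mul_of_nonneg_right (le_of_lt hx2) (by positivity)
    have he : (N / 2 + 3 * N / (2 * k)) * (2 * π) = (3 * π / k + π) * N := by
      field_simp; ring
    nlinarith
  have hlb : 2 / (k:ℝ) ≤ Real.sin θ := aux_sin_lb k θ (by linarith) h1 h2
  have habs : |Real.sin (2 * π * x / N)| = Real.sin θ := by
    have : 2 * π * x / N = θ + π := by rw [hθdef]; ring
    rw [this, Real.sin_add_pi, abs_neg, abs_of_nonneg (le_trans (by positivity) hlb)]
  rw [habs]
  have hrhs : (1:ℝ) ≤ (k:ℝ) / 2 * Real.sin θ := by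
    have : (k:ℝ) / 2 * (2 / k) ≤ (k:ℝ) / 2 * Real.sin θ :=
      mul_le_mul_of_nonneg_left hlb (by positivity)
    have he : (k:ℝ) / 2 * (2 / k) = 1 := by field_simp
    linarith
  calc |Real.sin (k * π * x / N)| ≤ 1 :=
        abs_le.2 ⟨Real.neg_one_le_sin _, Real.sin_le_one _⟩
    _ ≤ _ := hrhs
end

section
/- Let u be a real-valued C² function on an open set containing a closed rectangle Q = [p,q]×[0,s] with (Δ + μ)u = 0 on Q and |u| ≤ M on ∂Q, where 0 < μ < π²(16 + 1/16), q − p ≤ 1/8 and s ≤ 1. If S(x,y) = 8M·cos((π/4)(y − s/2))·cos(4π(x − (p+q)/2)) satisfies S > 0 on Q, then |u| ≤ 8M on Q. -/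
/-!
Since `ΔS = -π² (16 + 1/16) S` and `μ < π² (16 + 1/16)`, the positive function `S` is a strict
supersolution: `(Δ + μ) S < 0` on `Q`. On `Q` both cosine factors of `S` are at least `1/2`, so
`|u| ≤ M ≤ S` on `∂Q`. If `c := max_Q u / S` exceeded `1`, it would be attained at an interior
point `z₀`, where `u - c S` has a local maximum; there `0 ≥ Δ(u - c S) = -c (Δ + μ) S > 0`.
Hence `|u| ≤ S ≤ 8M` on `Q`.
-/

open Real Set Filter Topology

theorem IsLocalMax.iteratedDeriv_two_nonpos {f : ℝ → ℝ} {a : ℝ} (h : IsLocalMax f a)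
    (hf : ContinuousAt f a) : iteratedDeriv 2 f a ≤ 0 := by
  have h2 : iteratedDeriv 2 f a = deriv (deriv f) a := by
    rw [iteratedDeriv_succ, iteratedDeriv_one]
  by_contra! hpos
  have hmin := isLocalMin_of_deriv_deriv_pos (h2 ▸ hpos) h.deriv_eq_zero hf
  have hconst : f =ᶠ[𝓝 a] fun _ => f a := by
    filter_upwards [h, hmin] with x h1 h2 using le_antisymm h1 h2
  have := (hconst.iteratedDeriv 2).eq_of_nhds
  simp only [iteratedDeriv_const] at this
  exact hpos.ne' this

theorem iteratedDeriv_two_cos_mul_sub (a b x : ℝ) :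
    iteratedDeriv 2 (fun t => cos (a * (t - b))) x = -a ^ 2 * cos (a * (x - b)) := by
  rw [iteratedDeriv_comp_sub_const 2 (fun z => cos (a * z)) b,
    iteratedDeriv_comp_const_smul contDiff_cos, show 2 = 2 * 1 from rfl,
    Real.iteratedDeriv_even_cos]
  simp

theorem half_le_cos_of_abs_le {θ : ℝ} (h : |θ| ≤ π / 4) : 1 / 2 ≤ cos θ := by
  have hθ : θ ^ 2 ≤ 1 := by
    rw [← sq_abs]
    nlinarith [abs_nonneg θ, pi_lt_four]
  linarith [one_sub_sq_div_two_le_cos (x := θ)]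

noncomputable def planeLaplacian (f : ℝ × ℝ → ℝ) (z : ℝ × ℝ) : ℝ :=
  iteratedDeriv 2 (fun t => f (t, z.2)) z.1 + iteratedDeriv 2 (fun t => f (z.1, t)) z.2

section PlaneLaplacian

variable {f g : ℝ × ℝ → ℝ} {z : ℝ × ℝ}

theorem IsLocalMax.planeLaplacian_nonpos (h : IsLocalMax f z) (hf : ContinuousAt f z) :
    planeLaplacian f z ≤ 0 := by
  have hx : IsLocalMax (fun t => f (t, z.2)) z.1 :=
    h.comp_continuous (g := fun t => (t, z.2)) (by fun_prop)
  have hy : IsLocalMax (fun t => f (z.1, t)) z.2 :=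
    h.comp_continuous (g := fun t => (z.1, t)) (by fun_prop)
  have hfx : ContinuousAt (fun t => f (t, z.2)) z.1 := hf.comp (g := f) (by fun_prop)
  have hfy : ContinuousAt (fun t => f (z.1, t)) z.2 := hf.comp (g := f) (by fun_prop)
  exact add_nonpos (hx.iteratedDeriv_two_nonpos hfx) (hy.iteratedDeriv_two_nonpos hfy)

theorem planeLaplacian_sub_const_mul (hf : ContDiffAt ℝ 2 f z) (hg : ContDiffAt ℝ 2 g z) (c : ℝ) :
    planeLaplacian (fun w => f w - c * g w) z = planeLaplacian f z - c * planeLaplacian g z := by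
  have line {φ : ℝ × ℝ → ℝ} (hφ : ContDiffAt ℝ 2 φ z) :
      ContDiffAt ℝ 2 (fun t => φ (t, z.2)) z.1 ∧ ContDiffAt ℝ 2 (fun t => φ (z.1, t)) z.2 :=
    ⟨hφ.comp (g := φ) z.1 (by fun_prop), hφ.comp (g := φ) z.2 (by fun_prop)⟩
  simp only [planeLaplacian]
  rw [iteratedDeriv_fun_sub (line hf).1 (contDiffAt_const.mul (line hg).1),
    iteratedDeriv_fun_sub (line hf).2 (contDiffAt_const.mul (line hg).2),
    iteratedDeriv_const_mul_field, iteratedDeriv_const_mul_field]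
  ring

theorem planeLaplacian_neg : planeLaplacian (fun w => -f w) z = -planeLaplacian f z := by
  simp only [planeLaplacian, iteratedDeriv_fun_neg]
  ring

theorem planeLaplacian_cos_mul_cos (A a b c d : ℝ) :
    planeLaplacian (fun w => A * cos (a * (w.2 - b)) * cos (c * (w.1 - d))) z
      = -(a ^ 2 + c ^ 2) * (A * cos (a * (z.2 - b)) * cos (c * (z.1 - d))) := by
  simp only [planeLaplacian, mul_comm _ (cos (c * (_ - d))), iteratedDeriv_const_mul_field,
    iteratedDeriv_mul_const_field, iteratedDeriv_two_cos_mul_sub]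
  ring

end PlaneLaplacian

section Comparison

variable {Q : Set (ℝ × ℝ)} {u S : ℝ × ℝ → ℝ} {μ : ℝ}

theorem le_of_frontier_le_of_strictSupersolution (hQ : IsCompact Q)
    (hu : ∀ z ∈ interior Q, ContDiffAt ℝ 2 u z) (hS : ∀ z ∈ interior Q, ContDiffAt ℝ 2 S z)
    (hu_cont : ContinuousOn u Q) (hS_cont : ContinuousOn S Q) (hS_pos : ∀ z ∈ Q, 0 < S z)
    (hu_eq : ∀ z ∈ interior Q, planeLaplacian u z + μ * u z = 0)
    (hS_super : ∀ z ∈ interior Q, planeLaplacian S z + μ * S z < 0)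
    (hbdry : ∀ z ∈ frontier Q, u z ≤ S z) :
    ∀ z ∈ Q, u z ≤ S z := by
  intro z hz
  obtain ⟨z₀, hz₀, hmax⟩ := hQ.exists_isMaxOn ⟨z, hz⟩
    (hu_cont.div hS_cont fun w hw => (hS_pos w hw).ne')
  set c := u z₀ / S z₀
  have hle : ∀ w ∈ Q, u w ≤ c * S w := fun w hw => (div_le_iff₀ (hS_pos w hw)).1 (hmax hw)
  suffices hc : c ≤ 1 by nlinarith [hle z hz, hS_pos z hz]
  by_contra! hc
  have hz₀_eq : u z₀ = c * S z₀ := (div_mul_cancel₀ _ (hS_pos z₀ hz₀).ne').symm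
  have hz₀_int : z₀ ∈ interior Q := by
    by_contra h
    nlinarith [hbdry z₀ ⟨subset_closure hz₀, h⟩, hS_pos z₀ hz₀]
  have hloc : IsLocalMax (fun w => u w - c * S w) z₀ := by
    filter_upwards [mem_interior_iff_mem_nhds.1 hz₀_int] with w hw
    linarith [hle w hw]
  have hΔ := hloc.planeLaplacian_nonpos
    ((hu z₀ hz₀_int).continuousAt.sub (continuousAt_const.mul (hS z₀ hz₀_int).continuousAt))
  rw [planeLaplacian_sub_const_mul (hu z₀ hz₀_int) (hS z₀ hz₀_int)] at hΔ
  have hu_eq₀ := hu_eq z₀ hz₀_int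
  rw [hz₀_eq] at hu_eq₀
  nlinarith [mul_pos (by linarith : 0 < c) (neg_pos.2 (hS_super z₀ hz₀_int))]

theorem abs_le_of_frontier_abs_le_of_strictSupersolution (hQ : IsCompact Q)
    (hu : ∀ z ∈ interior Q, ContDiffAt ℝ 2 u z) (hS : ∀ z ∈ interior Q, ContDiffAt ℝ 2 S z)
    (hu_cont : ContinuousOn u Q) (hS_cont : ContinuousOn S Q) (hS_pos : ∀ z ∈ Q, 0 < S z)
    (hu_eq : ∀ z ∈ interior Q, planeLaplacian u z + μ * u z = 0)
    (hS_super : ∀ z ∈ interior Q, planeLaplacian S z + μ * S z < 0)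
    (hbdry : ∀ z ∈ frontier Q, |u z| ≤ S z) :
    ∀ z ∈ Q, |u z| ≤ S z := by
  have hneg : ∀ z ∈ Q, -u z ≤ S z := by
    refine le_of_frontier_le_of_strictSupersolution hQ (fun z hz => (hu z hz).neg) hS
      hu_cont.neg hS_cont hS_pos (fun z hz => ?_) hS_super
      fun z hz => neg_le.1 (abs_le.1 (hbdry z hz)).1
    rw [planeLaplacian_neg]
    linarith [hu_eq z hz]
  have hpos := le_of_frontier_le_of_strictSupersolution hQ hu hS hu_cont hS_cont hS_pos hu_eq
    hS_super fun z hz => (abs_le.1 (hbdry z hz)).2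
  exact fun z hz => abs_le.2 ⟨by linarith [hneg z hz], hpos z hz⟩

end Comparison

theorem half_le_cos_of_mem_rectangle {p q s : ℝ} (hpq : q - p ≤ 1 / 8) (hs : s ≤ 1) {z : ℝ × ℝ}
    (hz : z ∈ Icc p q ×ˢ Icc 0 s) :
    1 / 2 ≤ cos (π / 4 * (z.2 - s / 2)) ∧ 1 / 2 ≤ cos (4 * π * (z.1 - (p + q) / 2)) := by
  obtain ⟨⟨hx₁, hx₂⟩, hy₁, hy₂⟩ := hz
  have hπ := pi_pos
  exact ⟨half_le_cos_of_abs_le (abs_le.2 ⟨by nlinarith, by nlinarith⟩),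
    half_le_cos_of_abs_le (abs_le.2 ⟨by nlinarith, by nlinarith⟩)⟩

theorem stmt_17_general (p q s μ M : ℝ) (hpq : q - p ≤ 1 / 8) (hs : s ≤ 1)
    (hμ' : μ < π ^ 2 * (16 + 1 / 16))
    (Q : Set (ℝ × ℝ)) (hQ : Q = Set.Icc p q ×ˢ Set.Icc 0 s)
    (u : ℝ × ℝ → ℝ)
    (hreg : ∃ U : Set (ℝ × ℝ), IsOpen U ∧ Q ⊆ U ∧ ContDiffOn ℝ 2 u U)
    (hPDE : ∀ z ∈ Q, iteratedDeriv 2 (fun t => u (t, z.2)) z.1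
      + iteratedDeriv 2 (fun t => u (z.1, t)) z.2 + μ * u z = 0)
    (hbdry : ∀ z ∈ frontier Q, |u z| ≤ M)
    (S : ℝ × ℝ → ℝ)
    (hS : ∀ z : ℝ × ℝ, S z = 8 * M * Real.cos ((π / 4) * (z.2 - s / 2))
      * Real.cos (4 * π * (z.1 - (p + q) / 2)))
    (hSpos : ∀ z ∈ Q, 0 < S z) :
    ∀ z ∈ Q, |u z| ≤ 8 * M := by
  obtain ⟨U, hU, hQU, hu⟩ := hreg
  subst hQ
  have hS_fun : S = _ := funext hS
  have hQ_cpt : IsCompact (Icc p q ×ˢ Icc 0 s) := isCompact_Icc.prod isCompact_Icc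
  intro z hz
  obtain ⟨hcy, hcx⟩ := half_le_cos_of_mem_rectangle hpq hs hz
  have hM : 0 < M := by
    by_contra! hM
    nlinarith [hS z ▸ hSpos z hz, mul_pos (by linarith : (0 : ℝ) < cos (π / 4 * (z.2 - s / 2)))
      (by linarith : (0 : ℝ) < cos (4 * π * (z.1 - (p + q) / 2)))]
  have hS_super : ∀ w ∈ interior (Icc p q ×ˢ Icc 0 s),
      planeLaplacian S w + μ * S w < 0 := by
    intro w hw
    rw [hS_fun, planeLaplacian_cos_mul_cos]
    nlinarith [hS w ▸ hSpos w (interior_subset hw)]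
  have hbdry_S : ∀ w ∈ frontier (Icc p q ×ˢ Icc 0 s), |u w| ≤ S w := by
    intro w hw
    obtain ⟨hwy, hwx⟩ := half_le_cos_of_mem_rectangle hpq hs (hQ_cpt.isClosed.frontier_subset hw)
    rw [hS]
    nlinarith [hbdry w hw, mul_le_mul hwy hwx (by norm_num) (by linarith)]
  calc |u z| ≤ S z :=
        abs_le_of_frontier_abs_le_of_strictSupersolution hQ_cpt
          (fun w hw => hu.contDiffAt (hU.mem_nhds (hQU (interior_subset hw))))
          (fun _ _ => by rw [hS_fun]; fun_prop) (hu.continuousOn.mono hQU)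
          (by rw [hS_fun]; fun_prop) hSpos
          (fun w hw => hPDE w (interior_subset hw)) hS_super hbdry_S z hz
    _ ≤ 8 * M := by
      rw [hS]
      nlinarith [mul_le_one₀ (cos_le_one (π / 4 * (z.2 - s / 2))) (by linarith)
        (cos_le_one (4 * π * (z.1 - (p + q) / 2)))]

/-- Comparison-function / maximum-principle estimate: a solution of (Δ+μ)u = 0
on a thin rectangle Q with |u| ≤ M on ∂Q satisfies |u| ≤ 8M on Q, provided the
comparison function S is positive on Q. -/
theorem stmt_17 (p q s μ M : ℝ) (hpq : q - p ≤ 1 / 8) (hs : s ≤ 1)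
    (hμ : 0 < μ) (hμ' : μ < π ^ 2 * (16 + 1 / 16))
    (Q : Set (ℝ × ℝ)) (hQ : Q = Set.Icc p q ×ˢ Set.Icc 0 s)
    (u : ℝ × ℝ → ℝ)
    (hreg : ∃ U : Set (ℝ × ℝ), IsOpen U ∧ Q ⊆ U ∧ ContDiffOn ℝ 2 u U)
    (hPDE : ∀ z ∈ Q, iteratedDeriv 2 (fun t => u (t, z.2)) z.1
      + iteratedDeriv 2 (fun t => u (z.1, t)) z.2 + μ * u z = 0)
    (hbdry : ∀ z ∈ frontier Q, |u z| ≤ M)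
    (S : ℝ × ℝ → ℝ)
    (hS : ∀ z : ℝ × ℝ, S z = 8 * M * Real.cos ((π / 4) * (z.2 - s / 2))
      * Real.cos (4 * π * (z.1 - (p + q) / 2)))
    (hSpos : ∀ z ∈ Q, 0 < S z) :
    ∀ z ∈ Q, |u z| ≤ 8 * M :=
  stmt_17_general p q s μ M hpq hs hμ' Q hQ u hreg hPDE hbdry S hS hSpos
end
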